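/- Let d ≥ 5 be an integer. Then the minimum over nonnegative integers k of the function k ↦ (4k(k+d−2) + d(d−4))² / (4(4k(k+d−2) + (d−4)²)) is attained at k = 0 and equals d²/4. -/
import Mathlib


theorem hardy_rellich_constant_high_dim (d : ℕ) (hd : 5 ≤ d) :
    (∀ k : ℕ,
      (4 * (k : ℝ) * ((k : ℝ) + (d : ℝ) - 2) + (d : ℝ) * ((d : ℝ) - 4)) ^ 2 /
          (4 * (4 * (k : ℝ) * ((k : ℝ) + (d : ℝ) - 2) + ((d : ℝ) - 4) ^ 2)) ≥
        (4 * (0 : ℝ) * ((0 : ℝ) + (d : ℝ) - 2) + (d : ℝ) * ((d : ℝ) - 4)) ^ 2 /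
          (4 * (4 * (0 : ℝ) * ((0 : ℝ) + (d : ℝ) - 2) + ((d : ℝ) - 4) ^ 2))) ∧
    (4 * (0 : ℝ) * ((0 : ℝ) + (d : ℝ) - 2) + (d : ℝ) * ((d : ℝ) - 4)) ^ 2 /
        (4 * (4 * (0 : ℝ) * ((0 : ℝ) + (d : ℝ) - 2) + ((d : ℝ) - 4) ^ 2)) =
      (d : ℝ) ^ 2 / 4 := by
  have hD : (5 : ℝ) ≤ (d : ℝ) := by exact_mod_cast hd
  have h4 : (1 : ℝ) ≤ ((d : ℝ) - 4) := by linarith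
  have hzero : (4 * (0 : ℝ) * ((0 : ℝ) + (d : ℝ) - 2) + (d : ℝ) * ((d : ℝ) - 4)) ^ 2 /
        (4 * (4 * (0 : ℝ) * ((0 : ℝ) + (d : ℝ) - 2) + ((d : ℝ) - 4) ^ 2)) = (d : ℝ) ^ 2 / 4 := by
    have hne : ((d : ℝ) - 4) ≠ 0 := by linarith
    field_simp
    ring
  constructor
  · intro k
    rw [hzero, ge_iff_le]
    have hk : (k : ℝ) = 0 ∨ 1 ≤ (k : ℝ) := by
      rcases Nat.eq_zero_or_pos k with h | h
      · left; exact_mod_cast h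
      · right; exact_mod_cast h
    have hc : 0 ≤ 4 * (k : ℝ) * ((k : ℝ) + (d : ℝ) - 2) := by
      rcases hk with h | h
      · rw [h]; norm_num
      · nlinarith
    have hden : 0 < 4 * (4 * (k : ℝ) * ((k : ℝ) + (d : ℝ) - 2) + ((d : ℝ) - 4) ^ 2) := by
      nlinarith
    rw [div_le_div_iff₀ (by norm_num) hden]
    rcases hk with h | h
    · rw [h]; nlinarith [sq_nonneg (d:ℝ)]
    · have hc1 : 4 * ((d:ℝ) - 1) ≤ 4 * (k : ℝ) * ((k : ℝ) + (d : ℝ) - 2) := by nlinarith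
      have hpos : 0 ≤ 4 * (k:ℝ) * ((k:ℝ) + (d:ℝ) - 2) + (d:ℝ)^2 - 8*(d:ℝ) := by nlinarith
      nlinarith [mul_nonneg hc hpos]
  · exact hzero
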